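/- The quiver Γ^7_{1,2,2} of coloured oriented single and paired diagonals of a regular heptagon is isomorphic as a stable translation quiver to Z E_6/⟨ρ τ^{-7}⟩, where ρ is the automorphism of Z E_6 induced by the order-two diagram automorphism of the tree E_6; this quotient is the Auslander–Reiten quiver of the cluster category C_{E_6} = D^b(mod kE_6)/τ^{-1}Σ, on which the shift Σ acts as ρτ^{-6}. -/

import Mathlib

/-!
Coloured oriented single and paired diagonals in a regular polygon, following
L. Lamberti, "Combinatorial model for the cluster categories of type E".

The vertices of the regular `m`-gon `Π` are labelled by `ZMod m` (clockwise).
A coloured oriented diagonal `[i,j]_c` is encoded by the structure `Diag`;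
the colour `P` encodes a *paired* diagonal `[i,j]_P = {[i,j]_R, [j,i]_B}`.
-/

inductive Colour : Type
  | R : Colour
  | B : Colour
  | P : Colour
deriving DecidableEq

/-- A coloured oriented (single or paired) diagonal `[i,j]_c` of the regular
`m`-gon (for `m = 0` we interpret `ZMod 0 = ℤ` as the infinite-sided polygon). -/
structure Diag (m : ℕ) where
  i : ZMod m
  j : ZMod m
  c : Colour
deriving DecidableEq

/-- The simultaneous change of colour and orientation:
`ρ([i,j]_R) = [j,i]_B`, `ρ([i,j]_B) = [j,i]_R`, `ρ([i,j]_P) = [i,j]_P`. -/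
def rho {m : ℕ} : Diag m → Diag m
  | ⟨i, j, Colour.R⟩ => ⟨j, i, Colour.B⟩
  | ⟨i, j, Colour.B⟩ => ⟨j, i, Colour.R⟩
  | ⟨i, j, Colour.P⟩ => ⟨i, j, Colour.P⟩

/-- The anticlockwise rotation `[i,j]_c ↦ [i-1,j-1]_c`. -/
def shiftD {m : ℕ} (d : Diag m) : Diag m := ⟨d.i - 1, d.j - 1, d.c⟩

/-- The slice of `Π_{r,s,t}` based at the vertex `i` of `Π`:
the paired diagonals `[i,i+2]_P, …, [i,i+r+2]_P`, the red single diagonals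
`[i,i+r+3]_R, …, [i,i+r+s+2]_R` and the blue single diagonals
`[i+r+3,i]_B, …, [i+r+t+2,i]_B`. -/
def PiSetAt (r s t : ℕ) {m : ℕ} (i : ZMod m) : Set (Diag m) :=
  {d | (∃ k : ℕ, 2 ≤ k ∧ k ≤ r + 2 ∧ d = ⟨i, i + (k : ZMod m), Colour.P⟩) ∨
       (∃ k : ℕ, r + 3 ≤ k ∧ k ≤ r + s + 2 ∧ d = ⟨i, i + (k : ZMod m), Colour.R⟩) ∨
       (∃ k : ℕ, r + 3 ≤ k ∧ k ≤ r + t + 2 ∧ d = ⟨i + (k : ZMod m), i, Colour.B⟩)}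

/-- The set `Π_{r,s,t}` of coloured oriented single and paired diagonals of the
regular `m`-gon associated to the tree `T_{r,s,t}`. -/
def PiSet (r s t m : ℕ) : Set (Diag m) := ⋃ i : ZMod m, PiSetAt r s t i

open Classical in
/-- The translation `τ` on coloured oriented diagonals: the anticlockwise
rotation `[i,j]_c ↦ [i-1,j-1]_c`, composed with `ρ^{m}` on the first slice
`Π_{r,s,t}|_1` when the tree is symmetric (`s = t`). -/
noncomputable def tauD (r s t : ℕ) {m : ℕ} (d : Diag m) : Diag m :=
  if s = t ∧ d ∈ PiSetAt r s t (1 : ZMod m) then rho^[m] (shiftD d) else shiftD d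

/-- Minimal clockwise rotations (before the colour adjustment at the seam):
`[k,l]_c → [k,l+1]_c`, `[k,l]_c → [k+1,l]_c`, together with
`[k,k+r+2]_P → [k,k+r+3]_R`, `[k,k+r+2]_P → [k+r+3,k]_B`,
`[k,k+r+3]_R → [k+1,k+r+3]_P` and `[k+r+3,k]_B → [k+1,k+r+3]_P`. -/
def Rot (r : ℕ) {m : ℕ} (a b : Diag m) : Prop :=
  b = ⟨a.i, a.j + 1, a.c⟩ ∨ b = ⟨a.i + 1, a.j, a.c⟩ ∨
  (∃ k : ZMod m, a = ⟨k, k + ((r : ZMod m) + 2), Colour.P⟩ ∧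
    (b = ⟨k, k + ((r : ZMod m) + 3), Colour.R⟩ ∨
     b = ⟨k + ((r : ZMod m) + 3), k, Colour.B⟩)) ∨
  (∃ k : ZMod m,
    (a = ⟨k, k + ((r : ZMod m) + 3), Colour.R⟩ ∨
     a = ⟨k + ((r : ZMod m) + 3), k, Colour.B⟩) ∧
    b = ⟨k + 1, k + ((r : ZMod m) + 3), Colour.P⟩)

/-- In the symmetric case `s = t` with an odd-sided polygon, the arrows whose
source lies in `τ(Π_{r,t,t}|_1)` and whose (unadjusted) target lies in the
first slice `Π_{r,t,t}|_1` additionally change colour and orientation. -/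
def SeamTwist (r s t m : ℕ) (a b₀ : Diag m) : Prop :=
  s = t ∧ Odd m ∧ a ∈ (tauD r s t) '' (PiSetAt r s t (1 : ZMod m)) ∧
    b₀ ∈ PiSetAt r s t (1 : ZMod m)

/-- The arrows of the quiver `Γ^{m}_{r,s,t}`: minimal clockwise rotations
between elements of `Π_{r,s,t}`, adjusted by `ρ` at the seam. -/
def ArrowD (r s t m : ℕ) (a b : Diag m) : Prop :=
  a ∈ PiSet r s t m ∧ b ∈ PiSet r s t m ∧
    ∃ b₀, Rot r a b₀ ∧
      ((SeamTwist r s t m a b₀ ∧ b = rho b₀) ∨ (¬ SeamTwist r s t m a b₀ ∧ b = b₀))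

/-- The vertices of the tree `T_{r,s,t}`: a central vertex together with three
legs having `r`, `s`, `t` vertices respectively. -/
inductive TVert (r s t : ℕ) : Type
  | center : TVert r s t
  | legA : Fin r → TVert r s t
  | legB : Fin s → TVert r s t
  | legC : Fin t → TVert r s t
deriving DecidableEq

/-- An orientation of the tree `T_{r,s,t}`: the `A`-leg points towards the
centre, the `B`- and `C`-legs point away from it. -/
def TArrow {r s t : ℕ} (x y : TVert r s t) : Prop :=
  (∃ k l : Fin r, (l : ℕ) + 1 = (k : ℕ) ∧ x = TVert.legA k ∧ y = TVert.legA l) ∨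
  (∃ k : Fin r, (k : ℕ) = 0 ∧ x = TVert.legA k ∧ y = TVert.center) ∨
  (∃ k : Fin s, (k : ℕ) = 0 ∧ x = TVert.center ∧ y = TVert.legB k) ∨
  (∃ k l : Fin s, (k : ℕ) + 1 = (l : ℕ) ∧ x = TVert.legB k ∧ y = TVert.legB l) ∨
  (∃ k : Fin t, (k : ℕ) = 0 ∧ x = TVert.center ∧ y = TVert.legC k) ∨
  (∃ k l : Fin t, (k : ℕ) + 1 = (l : ℕ) ∧ x = TVert.legC k ∧ y = TVert.legC l)

/-- The order-two graph automorphism of a symmetric tree `T_{r,t,t}`,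
exchanging its two legs of length `t`. -/
def treeRho {r t : ℕ} : TVert r t t → TVert r t t
  | TVert.center => TVert.center
  | TVert.legA k => TVert.legA k
  | TVert.legB k => TVert.legC k
  | TVert.legC k => TVert.legB k

/-- `treeRho` as a permutation. -/
def treeRhoPerm (r t : ℕ) : Equiv.Perm (TVert r t t) :=
  Function.Involutive.toPerm treeRho (by intro x; cases x <;> rfl)

/-- The translation of the repetitive quiver `ℤQ`: `τ(m,i) = (m-1,i)`. -/
def ZTau {V : Type} (x : ℤ × V) : ℤ × V := (x.1 - 1, x.2)

/-- The arrows of the repetitive quiver `ℤQ` of a quiver with arrow relation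
`A`: for each arrow `i → j` of `Q` there are arrows `(m,i) → (m,j)` and
`(m,j) → (m+1,i)`. -/
def ZArrow {V : Type} (A : V → V → Prop) (x y : ℤ × V) : Prop :=
  (y.1 = x.1 ∧ A x.2 y.2) ∨ (y.1 = x.1 + 1 ∧ A y.2 x.2)

/-- The automorphism `τ^{-m} σ` of `ℤQ` given by shifting `m` steps to the
right and applying the graph automorphism `σ` of `Q`. -/
def shiftPerm {V : Type} (m : ℕ) (σ : Equiv.Perm V) : Equiv.Perm (ℤ × V) :=
  (Equiv.addRight (m : ℤ)).prodCongr σ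

/-- `φ` exhibits the quiver `Γ^{m}_{r,s,t}` (with vertex set `PiSet r s t m`,
arrow relation `ArrowD` and translation `tauD`) as the quotient of the
repetitive quiver `ℤQ` (with arrow relation `ZArrow A` and translation `ZTau`)
by the cyclic group generated by the automorphism `g`, as stable translation
quivers: `φ` is surjective onto the vertex set, its fibres are exactly the
`g`-orbits, it commutes with the translations, and the arrows of
`Γ^{m}_{r,s,t}` correspond exactly to the `g`-orbits of arrows of `ℤQ`. -/
def IsQuotientIso (r s t m : ℕ) {V : Type} (A : V → V → Prop)
    (g : Equiv.Perm (ℤ × V)) (φ : ℤ × V → Diag m) : Prop :=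
  (∀ x, φ x ∈ PiSet r s t m) ∧
  (∀ d ∈ PiSet r s t m, ∃ x, φ x = d) ∧
  (∀ x y, φ x = φ y ↔ ∃ k : ℤ, (g ^ k) x = y) ∧
  (∀ x, φ (ZTau x) = tauD r s t (φ x)) ∧
  (∀ x y, ArrowD r s t m (φ x) (φ y) ↔
    ∃ y', (∃ k : ℤ, (g ^ k) y = y') ∧ ZArrow A x y')

/-!
The translation `τ` of `Π_{1,2,2}` is a permutation of the coloured diagonals: a rotation followed
by `ρ` on the slice at `0`, which `ρ` preserves. Identify `E₆ = T_{1,2,2}` with that slice,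
`v ↦ b v`. Then `(n, v) ↦ τ^{-n}(b v)` commutes with the translations of `ℤE₆` and `Γ^7_{1,2,2}`,
and since `τ⁷ (b v) = b (ρ v)` it factors through `ℤE₆/⟨ρτ^{-7}⟩`. Every orbit meets
`{-6, …, 0} × E₆`, so what remains is a finite verification on the 42 diagonals `τ^r (b v)`,
`0 ≤ r < 7`: they enumerate `Π_{1,2,2}` bijectively, and the arrows between them are those of
`ℤE₆` between neighbouring slices, the ones from slice `0` to slice `1 ≡ -6` twisted by `ρ`.
-/

open Equiv

instance : Fintype Colour :=
  ⟨{Colour.R, Colour.B, Colour.P}, by intro x; cases x <;> simp⟩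

def Diag.equivProd (m : ℕ) : Diag m ≃ ZMod m × ZMod m × Colour where
  toFun d := (d.i, d.j, d.c)
  invFun p := ⟨p.1, p.2.1, p.2.2⟩

instance {m : ℕ} [NeZero m] : Fintype (Diag m) := Fintype.ofEquiv _ (Diag.equivProd m).symm

def TVert.equivSum (r s t : ℕ) : TVert r s t ≃ Unit ⊕ Fin r ⊕ Fin s ⊕ Fin t where
  toFun
    | .center => .inl ()
    | .legA k => .inr (.inl k)
    | .legB k => .inr (.inr (.inl k))
    | .legC k => .inr (.inr (.inr k))
  invFun
    | .inl () => .center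
    | .inr (.inl k) => .legA k
    | .inr (.inr (.inl k)) => .legB k
    | .inr (.inr (.inr k)) => .legC k
  left_inv x := by cases x <;> rfl
  right_inv x := by rcases x with _ | _ | _ | _ <;> rfl

instance {r s t : ℕ} : Fintype (TVert r s t) := Fintype.ofEquiv _ (TVert.equivSum r s t).symm

section Diagonals

variable {r s t m : ℕ}

theorem rho_involutive : Function.Involutive (rho : Diag m → Diag m) := by
  rintro ⟨i, j, _ | _ | _⟩ <;> rfl

theorem mem_PiSetAt_iff {i : ZMod m} {d : Diag m} :
    d ∈ PiSetAt r s t i ↔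
      (∃ k < r + 3, 2 ≤ k ∧ d = ⟨i, i + (k : ZMod m), Colour.P⟩) ∨
      (∃ k < r + s + 3, r + 3 ≤ k ∧ d = ⟨i, i + (k : ZMod m), Colour.R⟩) ∨
      (∃ k < r + t + 3, r + 3 ≤ k ∧ d = ⟨i + (k : ZMod m), i, Colour.B⟩) := by
  simp only [PiSetAt, Set.mem_ofPred_eq, Nat.lt_succ_iff]
  grind

instance (i : ZMod m) : DecidablePred (· ∈ PiSetAt r s t i) :=
  fun _ => decidable_of_iff _ mem_PiSetAt_iff.symm

instance [NeZero m] : DecidablePred (· ∈ PiSet r s t m) := fun d =>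
  decidable_of_iff (∃ i, d ∈ PiSetAt r s t i) (by simp [PiSet])

theorem shiftD_mem_PiSetAt_iff {i : ZMod m} {d : Diag m} :
    shiftD d ∈ PiSetAt r s t i ↔ d ∈ PiSetAt r s t (i + 1) := by
  rcases d with ⟨a, b, c⟩
  simp only [PiSetAt, Set.mem_ofPred_eq, shiftD, Diag.mk.injEq, sub_eq_iff_eq_add]
  grind

theorem rho_mem_PiSetAt_iff {i : ZMod m} {d : Diag m} :
    rho d ∈ PiSetAt r t t i ↔ d ∈ PiSetAt r t t i := by
  rcases d with ⟨a, b, _ | _ | _⟩ <;> simp [rho, PiSetAt] <;> grind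

def Diag.rotate (m : ℕ) : Perm (Diag m) where
  toFun := shiftD
  invFun d := ⟨d.i + 1, d.j + 1, d.c⟩
  left_inv d := by simp [shiftD]
  right_inv d := by simp [shiftD]

variable (r t) in
def rhoOnSlice (d : Diag m) : Diag m := if d ∈ PiSetAt r t t 0 then rho d else d

theorem rhoOnSlice_involutive : Function.Involutive (rhoOnSlice r t : Diag m → Diag m) := by
  intro d
  by_cases h : d ∈ PiSetAt r t t 0
  · simp [rhoOnSlice, h, rho_mem_PiSetAt_iff, rho_involutive d]
  · simp [rhoOnSlice, h]

variable (r t m) in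
def tauPerm : Perm (Diag m) :=
  (Diag.rotate m).trans (rhoOnSlice_involutive (r := r) (t := t)).toPerm

theorem tauPerm_apply (d : Diag m) :
    tauPerm r t m d = if d ∈ PiSetAt r t t 1 then rho (shiftD d) else shiftD d := by
  simp [tauPerm, Diag.rotate, rhoOnSlice, shiftD_mem_PiSetAt_iff]

theorem tauD_eq_tauPerm (hm : Odd m) (d : Diag m) : tauD r t t d = tauPerm r t m d := by
  simp [tauD, tauPerm_apply, rho_involutive.iterate_odd hm]

theorem tauPerm_mem_PiSetAt_zero_iff {d : Diag m} :
    tauPerm r t m d ∈ PiSetAt r t t (0 : ZMod m) ↔ d ∈ PiSetAt r t t 1 := by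
  rw [tauPerm_apply]
  split_ifs with h
  · simp [h, rho_mem_PiSetAt_iff, shiftD_mem_PiSetAt_iff]
  · simp [h, shiftD_mem_PiSetAt_iff]

theorem seamTwist_iff (hm : Odd m) {a b : Diag m} :
    SeamTwist r t t m a b ↔ a ∈ PiSetAt r t t 0 ∧ b ∈ PiSetAt r t t 1 := by
  have himage : a ∈ tauD r t t '' PiSetAt r t t 1 ↔ a ∈ PiSetAt r t t 0 := by
    rw [funext (tauD_eq_tauPerm hm), Equiv.image_eq_preimage_symm, Set.mem_preimage,
      ← tauPerm_mem_PiSetAt_zero_iff, Equiv.apply_symm_apply]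
  simp [SeamTwist, himage, hm]

variable (r) in
def rotTargets (a : Diag m) : List (Diag m) :=
  [⟨a.i, a.j + 1, a.c⟩, ⟨a.i + 1, a.j, a.c⟩] ++
  (if a.c = Colour.P ∧ a.j = a.i + ((r : ZMod m) + 2) then
      [⟨a.i, a.i + ((r : ZMod m) + 3), Colour.R⟩, ⟨a.i + ((r : ZMod m) + 3), a.i, Colour.B⟩]
    else []) ++
  (if a.c = Colour.R ∧ a.j = a.i + ((r : ZMod m) + 3) then [⟨a.i + 1, a.j, Colour.P⟩] else []) ++
  (if a.c = Colour.B ∧ a.i = a.j + ((r : ZMod m) + 3) then [⟨a.j + 1, a.i, Colour.P⟩] else [])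

theorem rot_iff_mem_rotTargets {a b : Diag m} : Rot r a b ↔ b ∈ rotTargets r a := by
  rcases a with ⟨i, j, c⟩
  simp only [Rot, rotTargets, List.mem_append, List.mem_cons, List.not_mem_nil, or_false]
  constructor
  · rintro (rfl | rfl | ⟨k, h, hb⟩ | ⟨k, h | h, rfl⟩) <;> simp_all
  · intro h
    split_ifs at h <;> simp only [List.mem_cons, List.not_mem_nil, or_false] at h <;> grind

theorem arrowD_iff (hm : Odd m) {a b : Diag m} :
    ArrowD r t t m a b ↔ a ∈ PiSet r t t m ∧ b ∈ PiSet r t t m ∧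
      ∃ b₀ ∈ rotTargets r a,
        b = if a ∈ PiSetAt r t t 0 ∧ b₀ ∈ PiSetAt r t t 1 then rho b₀ else b₀ := by
  simp only [ArrowD, seamTwist_iff hm, rot_iff_mem_rotTargets]
  grind

end Diagonals

theorem Equiv.Perm.apply_zpow_apply_eq {α β : Type*} {f : α → β} {g : Perm α}
    (h : ∀ x, f (g x) = f x) (k : ℤ) (x : α) : f ((g ^ k) x) = f x := by
  induction k using Int.induction_on generalizing x with
  | zero => rfl
  | succ k ih => rw [zpow_add_one, Perm.mul_apply, ih, h]
  | pred k ih => rw [zpow_sub_one, Perm.mul_apply, ih, ← h]; simp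

section RepetitiveQuotient

variable {V X : Type} {m : ℕ} {σ : Perm V} {T : Perm X} {b : V → X} {A : V → V → Prop}

theorem shiftPerm_apply (m : ℕ) (σ : Perm V) (x : ℤ × V) :
    shiftPerm m σ x = (x.1 + m, σ x.2) := rfl

theorem shiftPerm_inv_apply (m : ℕ) (σ : Perm V) (x : ℤ × V) :
    (shiftPerm m σ)⁻¹ x = (x.1 - m, σ⁻¹ x.2) := rfl

theorem shiftPerm_zpow_apply (m : ℕ) (σ : Perm V) (k : ℤ) (x : ℤ × V) :
    (shiftPerm m σ ^ k) x = (x.1 + m * k, (σ ^ k) x.2) := by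
  induction k using Int.induction_on generalizing x with
  | zero => simp
  | succ k ih =>
    rw [zpow_add_one, Perm.mul_apply, ih, zpow_add_one, Perm.mul_apply, shiftPerm_apply]
    simp only [Prod.mk.injEq, and_true]
    ring
  | pred k ih =>
    rw [zpow_sub_one, Perm.mul_apply, ih, zpow_sub_one, Perm.mul_apply, shiftPerm_inv_apply]
    simp only [Prod.mk.injEq, and_true]
    ring

def sliceMap (T : Perm X) (b : V → X) (x : ℤ × V) : X := (T ^ (-x.1)) (b x.2)

def sliceTranslate (T : Perm X) (b : V → X) (p : Fin m × V) : X := (T ^ (p.1 : ℕ)) (b p.2)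

/-- The arrows of `ℤQ/⟨shiftPerm m σ⟩` on the fundamental domain `{-(m-1), …, 0} × V`, the
point `p` standing for `(-p.1, p.2)`. -/
def quotArrow (A : V → V → Prop) (σ : Perm V) (p q : Fin m × V) : Prop :=
  (q.1 = p.1 ∧ A p.2 q.2) ∨ ((q.1 : ℕ) + 1 = p.1 ∧ A q.2 p.2) ∨
    ((p.1 : ℕ) = 0 ∧ (q.1 : ℕ) + 1 = m ∧ A (σ q.2) p.2)

instance [DecidableEq V] [DecidableRel A] : DecidableRel (quotArrow (m := m) A σ) := fun _ _ => by
  unfold quotArrow; infer_instance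

theorem sliceMap_zTau (x : ℤ × V) : sliceMap T b (ZTau x) = T (sliceMap T b x) := by
  rw [sliceMap, sliceMap, ZTau, show -(x.1 - 1) = 1 + -x.1 by ring, zpow_one_add, Perm.mul_apply]

theorem sliceMap_neg_val (p : Fin m × V) :
    sliceMap T b (-(p.1 : ℤ), p.2) = sliceTranslate T b p := by
  simp [sliceMap, sliceTranslate]

theorem sliceMap_shiftPerm_zpow (hσ : ∀ v, (T ^ m) (b v) = b (σ v)) (k : ℤ) (x : ℤ × V) :
    sliceMap T b ((shiftPerm m σ ^ k) x) = sliceMap T b x := by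
  refine Perm.apply_zpow_apply_eq (fun x => ?_) k x
  rw [sliceMap, shiftPerm_apply, ← hσ, ← zpow_natCast, ← Perm.mul_apply, ← zpow_add, sliceMap]
  congr 2
  ring

theorem exists_shiftPerm_zpow_eq (hm : 0 < m) (σ : Perm V) (x : ℤ × V) :
    ∃ k : ℤ, ∃ p : Fin m × V, (shiftPerm m σ ^ k) x = (-(p.1 : ℤ), p.2) := by
  have hdiv := Int.mul_ediv_add_emod (-x.1) m
  have hnonneg := Int.emod_nonneg (-x.1) (b := m) (by omega)
  have hlt := Int.emod_lt_of_pos (-x.1) (b := m) (by omega)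
  refine ⟨-x.1 / m, (⟨((-x.1) % m).toNat, by omega⟩, (σ ^ (-x.1 / m)) x.2), ?_⟩
  rw [shiftPerm_zpow_apply]
  simp only [Prod.mk.injEq, and_true]
  omega

theorem sliceMap_eq_iff (hm : 0 < m) (hσ : ∀ v, (T ^ m) (b v) = b (σ v))
    (hinj : Function.Injective (sliceTranslate T b : Fin m × V → X)) {x y : ℤ × V} :
    sliceMap T b x = sliceMap T b y ↔ ∃ k : ℤ, (shiftPerm m σ ^ k) x = y := by
  constructor
  · intro h
    obtain ⟨k, p, hx⟩ := exists_shiftPerm_zpow_eq hm σ x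
    obtain ⟨l, q, hy⟩ := exists_shiftPerm_zpow_eq hm σ y
    have hpq : p = q := hinj <| by
      simp only [← sliceMap_neg_val, ← hx, ← hy, sliceMap_shiftPerm_zpow hσ, h]
    refine ⟨-l + k, ?_⟩
    rw [zpow_add, Perm.mul_apply, hx, hpq, ← hy, ← Perm.mul_apply, ← zpow_add, neg_add_cancel,
      zpow_zero, Perm.one_apply]
  · rintro ⟨k, rfl⟩
    exact (sliceMap_shiftPerm_zpow hσ k x).symm

theorem zArrow_shiftPerm_iff (hA : ∀ v w, A (σ v) (σ w) ↔ A v w) {x y : ℤ × V} :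
    ZArrow A (shiftPerm m σ x) (shiftPerm m σ y) ↔ ZArrow A x y := by
  simp only [ZArrow, shiftPerm_apply, hA]
  constructor <;> rintro (⟨h, hxy⟩ | ⟨h, hxy⟩)
  all_goals first | exact Or.inl ⟨by omega, hxy⟩ | exact Or.inr ⟨by omega, hxy⟩

theorem exists_zArrow_shiftPerm_zpow_left_iff (hA : ∀ v w, A (σ v) (σ w) ↔ A v w)
    (k : ℤ) (x y : ℤ × V) :
    (∃ j : ℤ, ZArrow A ((shiftPerm m σ ^ k) x) ((shiftPerm m σ ^ j) y)) ↔
      ∃ j : ℤ, ZArrow A x ((shiftPerm m σ ^ j) y) := by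
  refine Iff.of_eq (Perm.apply_zpow_apply_eq
    (f := fun x => ∃ j : ℤ, ZArrow A x ((shiftPerm m σ ^ j) y)) (fun x => ?_) k x)
  refine propext ⟨fun ⟨j, h⟩ => ⟨j - 1, ?_⟩, fun ⟨j, h⟩ => ⟨1 + j, ?_⟩⟩
  · rwa [← zArrow_shiftPerm_iff hA, ← Perm.mul_apply, ← zpow_one_add, add_sub_cancel]
  · rwa [zpow_one_add, Perm.mul_apply, zArrow_shiftPerm_iff hA]

theorem exists_zArrow_shiftPerm_zpow_right_iff (k : ℤ) (x y : ℤ × V) :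
    (∃ j : ℤ, ZArrow A x ((shiftPerm m σ ^ j) ((shiftPerm m σ ^ k) y))) ↔
      ∃ j : ℤ, ZArrow A x ((shiftPerm m σ ^ j) y) := by
  simp only [← Perm.mul_apply, ← zpow_add]
  exact ⟨fun ⟨j, h⟩ => ⟨j + k, h⟩, fun ⟨j, h⟩ => ⟨j - k, by rwa [sub_add_cancel]⟩⟩

theorem exists_zArrow_shiftPerm_zpow_iff (σ : Perm V) (p q : Fin m × V) :
    (∃ j : ℤ, ZArrow A (-(p.1 : ℤ), p.2) ((shiftPerm m σ ^ j) (-(q.1 : ℤ), q.2))) ↔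
      quotArrow A σ p q := by
  have hp := p.1.isLt
  have hq := q.1.isLt
  simp only [ZArrow, quotArrow, shiftPerm_zpow_apply, Fin.ext_iff]
  constructor
  · rintro ⟨j, ⟨h, hA⟩ | ⟨h, hA⟩⟩
    · obtain rfl : j = 0 := by nlinarith
      exact Or.inl ⟨by omega, by simpa using hA⟩
    · have : j ≤ 1 := by nlinarith
      have : 0 ≤ j := by nlinarith
      interval_cases j
      · exact Or.inr (Or.inl ⟨by omega, by simpa using hA⟩)
      · exact Or.inr (Or.inr ⟨by omega, by omega, by simpa using hA⟩)
  · rintro (⟨h, hA⟩ | ⟨h, hA⟩ | ⟨hp, hq, hA⟩)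
    · exact ⟨0, Or.inl ⟨by omega, by simpa using hA⟩⟩
    · exact ⟨0, Or.inr ⟨by omega, by simpa using hA⟩⟩
    · exact ⟨1, Or.inr ⟨by omega, by simpa using hA⟩⟩

theorem sliceMap_rel_iff {R : X → X → Prop} (hm : 0 < m) (hσ : ∀ v, (T ^ m) (b v) = b (σ v))
    (hA : ∀ v w, A (σ v) (σ w) ↔ A v w)
    (hR : ∀ p q : Fin m × V, R (sliceTranslate T b p) (sliceTranslate T b q) ↔ quotArrow A σ p q)
    (x y : ℤ × V) :
    R (sliceMap T b x) (sliceMap T b y) ↔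
      ∃ y', (∃ k : ℤ, (shiftPerm m σ ^ k) y = y') ∧ ZArrow A x y' := by
  obtain ⟨k, p, hx⟩ := exists_shiftPerm_zpow_eq hm σ x
  obtain ⟨l, q, hy⟩ := exists_shiftPerm_zpow_eq hm σ y
  rw [exists_exists_eq_and, ← exists_zArrow_shiftPerm_zpow_left_iff hA k,
    ← exists_zArrow_shiftPerm_zpow_right_iff l, hx, hy, exists_zArrow_shiftPerm_zpow_iff, ← hR,
    ← sliceMap_shiftPerm_zpow hσ k x, ← sliceMap_shiftPerm_zpow hσ l y, hx, hy,
    sliceMap_neg_val, sliceMap_neg_val]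

end RepetitiveQuotient

theorem isQuotientIso_sliceMap {r s t m : ℕ} {V : Type} {A : V → V → Prop} {σ : Perm V}
    {T : Perm (Diag m)} {b : V → Diag m} (hm : 0 < m) (hT : ∀ d, tauD r s t d = T d)
    (hσ : ∀ v, (T ^ m) (b v) = b (σ v)) (hA : ∀ v w, A (σ v) (σ w) ↔ A v w)
    (hbij : Set.BijOn (sliceTranslate T b : Fin m × V → Diag m) Set.univ (PiSet r s t m))
    (harrow : ∀ p q : Fin m × V,
      ArrowD r s t m (sliceTranslate T b p) (sliceTranslate T b q) ↔ quotArrow A σ p q) :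
    IsQuotientIso r s t m A (shiftPerm m σ) (sliceMap T b) := by
  refine ⟨fun x => ?_, fun d hd => ?_, fun x y => sliceMap_eq_iff hm hσ
    (Set.injOn_univ.mp hbij.injOn), fun x => by rw [sliceMap_zTau, hT],
    sliceMap_rel_iff hm hσ hA harrow⟩
  · obtain ⟨k, p, hx⟩ := exists_shiftPerm_zpow_eq hm σ x
    rw [← sliceMap_shiftPerm_zpow hσ k, hx, sliceMap_neg_val]
    exact hbij.mapsTo (Set.mem_univ p)
  · obtain ⟨p, -, rfl⟩ := hbij.surjOn hd
    exact ⟨_, sliceMap_neg_val p⟩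

instance {r s t : ℕ} : DecidableRel (TArrow (r := r) (s := s) (t := t)) := fun _ _ => by
  unfold TArrow; infer_instance

theorem tArrow_treeRho_iff {r t : ℕ} {v w : TVert r t t} :
    TArrow (treeRho v) (treeRho w) ↔ TArrow v w := by
  cases v <;> cases w <;> simp [TArrow, treeRho]

def baseSlice (r s t m : ℕ) : TVert r s t → Diag m
  | .center => ⟨0, (r + 2 : ℕ), Colour.P⟩
  | .legA k => ⟨0, (r + 1 - k : ℕ), Colour.P⟩
  | .legB k => ⟨0, (r + 3 + k : ℕ), Colour.R⟩
  | .legC k => ⟨(r + 3 + k : ℕ), 0, Colour.B⟩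

instance : DecidableRel (ArrowD 1 2 2 7) := fun _ _ =>
  decidable_of_iff _ (arrowD_iff (by decide)).symm

theorem tauPerm_pow_seven_baseSlice (v : TVert 1 2 2) :
    (tauPerm 1 2 7 ^ 7) (baseSlice 1 2 2 7 v) = baseSlice 1 2 2 7 (treeRhoPerm 1 2 v) := by
  revert v
  decide +kernel

theorem bijOn_sliceTranslate_baseSlice :
    Set.BijOn (sliceTranslate (tauPerm 1 2 7) (baseSlice 1 2 2 7) : Fin 7 × TVert 1 2 2 → Diag 7)
      Set.univ (PiSet 1 2 2 7) := by
  refine ⟨fun p _ => ?_, Set.injOn_univ.mpr ?_, fun d hd => ?_⟩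
  · revert p
    decide +kernel
  · decide +kernel
  · have hsurj : ∀ d ∈ PiSet 1 2 2 7, ∃ p : Fin 7 × TVert 1 2 2,
        sliceTranslate (tauPerm 1 2 7) (baseSlice 1 2 2 7) p = d := by
      decide +kernel
    obtain ⟨p, rfl⟩ := hsurj d hd
    exact ⟨p, Set.mem_univ p, rfl⟩

theorem arrowD_sliceTranslate_baseSlice_iff (p q : Fin 7 × TVert 1 2 2) :
    ArrowD 1 2 2 7 (sliceTranslate (tauPerm 1 2 7) (baseSlice 1 2 2 7) p)
        (sliceTranslate (tauPerm 1 2 7) (baseSlice 1 2 2 7) q) ↔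
      quotArrow TArrow (treeRhoPerm 1 2) p q := by
  revert p q
  decide +kernel

/-- Theorem 4.2 for `E₆`. The quiver `Γ^7_{1,2,2}` of
coloured oriented single and paired diagonals of a regular heptagon is
isomorphic, as a stable translation quiver, to `ℤ E₆ / ⟨ρ τ^{-7}⟩`, where
`E₆ = T_{1,2,2}` and `ρ` is induced by the order-two diagram automorphism of
`E₆`.  (This quotient is the AR-quiver of the cluster category
`C_{E₆} = D^b(mod k E₆)/τ^{-1}Σ`, on which `Σ` acts as `ρ τ^{-6}`.) -/
theorem gamma_heptagon_iso_ZE6_quotient :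
    ∃ φ : ℤ × TVert 1 2 2 → Diag 7,
      IsQuotientIso 1 2 2 7 TArrow (shiftPerm 7 (treeRhoPerm 1 2)) φ :=
  ⟨_, isQuotientIso_sliceMap (by norm_num) (tauD_eq_tauPerm (by decide))
    tauPerm_pow_seven_baseSlice (fun _ _ => tArrow_treeRho_iff) bijOn_sliceTranslate_baseSlice
    arrowD_sliceTranslate_baseSlice_iff⟩
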